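/- arXiv:2410.05897 — 4 statements merged into one kernel-verified Lean document; each statement's English description precedes it below -/
import Mathlib

section
/- Let φ_v(t) = (1/√(2πv)) e^{-t²/(2v)} denote the centered normal density with variance v, and φ⁺_v(t) = (t/v) e^{-t²/(2v)} 1_{t ≥ 0} the Rayleigh density with scale √v. Then for any v ∈ (0, 1/2] and any t ∈ ℝ: −|t| e^{-t²/2} 1_{t<0} ≤ (φ_v * φ⁺_{1−v})(t) − √(1−v)·φ⁺_1(t) ≤ √v · e^{-t²/(2v)} + |t| e^{-t²/2} 1_{t<0}, where * denotes convolution on ℝ. -/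
/-!
Completing the square, for `v + w = 1` and `s ≥ 0`,
`φ_v(t - s) φ⁺_w(s) = e^{-t²/2} / √w · s φ_{vw}(s - tw)`.
Splitting `s = (s - tw) + tw` and integrating the first part exactly gives
`(φ_v * φ⁺_w)(t) = v φ_v(t) + √w · t e^{-t²/2} · p`, where `p = ℙ(N(tw, vw) > 0) ∈ [0, 1]`.
Since `v φ_v(t) ≤ √v e^{-t²/(2v)}`, this yields every bound except the lower one for `t > 0`,
which is the Mills ratio bound `1 - p ≤ (vw / tw) φ_{vw}(tw)`.
-/

open Real MeasureTheory

/-- The centered normal density with variance `v`. -/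
noncomputable def normalDens (v t : ℝ) : ℝ :=
  (1 / Real.sqrt (2 * Real.pi * v)) * Real.exp (-t ^ 2 / (2 * v))

/-- The Rayleigh density with scale `√v`. -/
noncomputable def rayleighDens (v t : ℝ) : ℝ :=
  if 0 ≤ t then (t / v) * Real.exp (-t ^ 2 / (2 * v)) else 0

open Set ProbabilityTheory

section NormalDens

variable {b : ℝ}

lemma normalDens_sub_eq_gaussianPDFReal (b μ x : ℝ) :
    normalDens b (x - μ) = gaussianPDFReal μ b.toNNReal x := by
  rcases le_or_gt 0 b with hb | hb
  · simp [normalDens, gaussianPDFReal, Real.coe_toNNReal _ hb]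
  · simp [normalDens, gaussianPDFReal, Real.toNNReal_of_nonpos hb.le,
      Real.sqrt_eq_zero_of_nonpos (by nlinarith [pi_pos] : 2 * π * b ≤ 0)]

lemma normalDens_nonneg (b x : ℝ) : 0 ≤ normalDens b x := by
  unfold normalDens; positivity

lemma normalDens_neg (b x : ℝ) : normalDens b (-x) = normalDens b x := by
  simp [normalDens]

lemma integrable_normalDens_sub (b μ : ℝ) : Integrable fun x => normalDens b (x - μ) := by
  simpa only [normalDens_sub_eq_gaussianPDFReal] using integrable_gaussianPDFReal μ _

lemma integral_normalDens_sub (hb : 0 < b) (μ : ℝ) : ∫ x, normalDens b (x - μ) = 1 := by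
  simpa only [normalDens_sub_eq_gaussianPDFReal] using
    integral_gaussianPDFReal_eq_one μ (by simpa using hb)

lemma integrable_sub_mul_normalDens_sub (hb : 0 < b) (μ : ℝ) :
    Integrable fun x => (x - μ) * normalDens b (x - μ) := by
  have h : Integrable fun x : ℝ => x * normalDens b x := by
    have := (integrable_mul_exp_neg_mul_sq (b := 1 / (2 * b)) (by positivity)).const_mul
      (1 / √(2 * π * b))
    refine this.congr (ae_of_all _ fun x => ?_)
    simp only [normalDens]
    ring_nf
  exact h.comp_sub_right μ

lemma integrable_sub_mul_normalDens_sub' (hb : 0 < b) (μ : ℝ) :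
    Integrable fun x => (μ - x) * normalDens b (x - μ) :=
  (integrable_sub_mul_normalDens_sub hb μ).neg.congr
    (ae_of_all _ fun x => by simp only [Pi.neg_apply]; ring)

lemma hasDerivAt_normalDens (hb : b ≠ 0) (x : ℝ) :
    HasDerivAt (normalDens b) (-(x / b) * normalDens b x) x := by
  have := ((hasDerivAt_pow 2 x).neg.div_const (2 * b)).exp.const_mul (1 / √(2 * π * b))
  refine this.congr_deriv ?_
  simp only [normalDens, Pi.neg_apply]
  field_simp
  ring

lemma hasDerivAt_normalDens_sub (hb : b ≠ 0) (μ x : ℝ) :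
    HasDerivAt (fun x => normalDens b (x - μ)) (-((x - μ) / b) * normalDens b (x - μ)) x :=
  (hasDerivAt_normalDens hb (x - μ)).comp_sub_const x μ

lemma integral_Ioi_sub_mul_normalDens_sub (hb : 0 < b) (μ a : ℝ) :
    ∫ x in Ioi a, (x - μ) * normalDens b (x - μ) = b * normalDens b (a - μ) := by
  have hderiv (x : ℝ) : HasDerivAt (fun x => -b * normalDens b (x - μ))
      ((x - μ) * normalDens b (x - μ)) x :=
    ((hasDerivAt_normalDens_sub hb.ne' μ x).const_mul (-b)).congr_deriv (by field_simp)
  have hint := (integrable_sub_mul_normalDens_sub hb μ).integrableOn (s := Ioi a)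
  rw [integral_Ioi_of_hasDerivAt_of_tendsto' (fun x _ => hderiv x) hint
    (tendsto_zero_of_hasDerivAt_of_integrableOn_Ioi (fun x _ => hderiv x) hint
      ((integrable_normalDens_sub b μ).const_mul (-b)).integrableOn)]
  ring

lemma integral_Iic_sub_mul_normalDens_sub (hb : 0 < b) (μ a : ℝ) :
    ∫ x in Iic a, (μ - x) * normalDens b (x - μ) = b * normalDens b (a - μ) := by
  have hderiv (x : ℝ) : HasDerivAt (fun x => b * normalDens b (x - μ))
      ((μ - x) * normalDens b (x - μ)) x :=
    ((hasDerivAt_normalDens_sub hb.ne' μ x).const_mul b).congr_deriv (by field_simp; ring)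
  have hint := (integrable_sub_mul_normalDens_sub' hb μ).integrableOn (s := Iic a)
  rw [integral_Iic_of_hasDerivAt_of_tendsto' (fun x _ => hderiv x) hint
    (tendsto_zero_of_hasDerivAt_of_integrableOn_Iic (fun x _ => hderiv x) hint
      ((integrable_normalDens_sub b μ).const_mul b).integrableOn)]
  ring

lemma integral_Ioi_normalDens_sub_le_one (hb : 0 < b) (μ a : ℝ) :
    ∫ x in Ioi a, normalDens b (x - μ) ≤ 1 :=
  (setIntegral_le_integral (integrable_normalDens_sub b μ)
    (ae_of_all _ fun x => normalDens_nonneg b (x - μ))).trans_eq (integral_normalDens_sub hb μ)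

lemma one_sub_integral_Ioi_normalDens_sub_le (hb : 0 < b) {μ a : ℝ} (ha : a < μ) :
    1 - ∫ x in Ioi a, normalDens b (x - μ) ≤ b / (μ - a) * normalDens b (a - μ) := by
  have hint := integrable_normalDens_sub b μ
  have hsplit : 1 - ∫ x in Ioi a, normalDens b (x - μ) = ∫ x in Iic a, normalDens b (x - μ) := by
    rw [← integral_normalDens_sub hb μ, ← intervalIntegral.integral_Iic_add_Ioi hint.integrableOn
      hint.integrableOn]
    ring
  have hμa : 0 < μ - a := sub_pos.2 ha
  calc 1 - ∫ x in Ioi a, normalDens b (x - μ)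
      = ∫ x in Iic a, normalDens b (x - μ) := hsplit
    _ ≤ ∫ x in Iic a, (μ - a)⁻¹ * ((μ - x) * normalDens b (x - μ)) := by
      refine setIntegral_mono_on hint.integrableOn ?_ measurableSet_Iic fun x hx => ?_
      · exact ((integrable_sub_mul_normalDens_sub' hb μ).const_mul _).integrableOn
      · rw [← mul_assoc]
        refine le_mul_of_one_le_left (normalDens_nonneg b _) ?_
        rw [inv_mul_eq_div, one_le_div hμa]
        linarith [hx.out]
    _ = b / (μ - a) * normalDens b (a - μ) := by
      rw [integral_const_mul, integral_Iic_sub_mul_normalDens_sub hb]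
      ring

lemma integral_Ioi_mul_normalDens_sub (hb : 0 < b) (μ : ℝ) :
    ∫ s in Ioi 0, s * normalDens b (s - μ) =
      b * normalDens b μ + μ * ∫ s in Ioi 0, normalDens b (s - μ) := by
  have hsplit : (fun s => s * normalDens b (s - μ)) =
      fun s => (s - μ) * normalDens b (s - μ) + μ * normalDens b (s - μ) := by
    ext s
    ring
  rw [hsplit, integral_add (integrable_sub_mul_normalDens_sub hb μ).integrableOn
    ((integrable_normalDens_sub b μ).const_mul μ).integrableOn, integral_const_mul,
    integral_Ioi_sub_mul_normalDens_sub hb, zero_sub, normalDens_neg]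

lemma mul_normalDens_le {v : ℝ} (hv : 0 < v) (t : ℝ) :
    v * normalDens v t ≤ √v * exp (-t ^ 2 / (2 * v)) := by
  have hπ : 1 ≤ √(2 * π) := one_le_sqrt.2 (by nlinarith [pi_gt_three])
  have hcoef : v * (1 / √(2 * π * v)) = √v / √(2 * π) := by
    have : 0 < √v := sqrt_pos.2 hv
    rw [sqrt_mul (by positivity)]
    field_simp
    rw [sq_sqrt hv.le]
  rw [normalDens, ← mul_assoc, hcoef]
  gcongr
  exact div_le_self (sqrt_nonneg v) hπ

end NormalDens

section Convolution

variable {v w : ℝ}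

lemma neg_sq_div_add_neg_sq_div (hv : v ≠ 0) (hw : w ≠ 0) (hvw : v + w = 1) (t s : ℝ) :
    -(t - s) ^ 2 / (2 * v) + -s ^ 2 / (2 * w) = -t ^ 2 / 2 + -(s - t * w) ^ 2 / (2 * (v * w)) := by
  obtain rfl := eq_sub_of_add_eq hvw
  field_simp
  ring

lemma normalDens_sub_mul_rayleighDens (hv : 0 < v) (hw : 0 < w) (hvw : v + w = 1) (t s : ℝ) :
    normalDens v (t - s) * rayleighDens w s =
      exp (-t ^ 2 / 2) / √w * (Ioi 0).indicator (fun s => s * normalDens (v * w) (s - t * w)) s := by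
  rcases lt_or_ge 0 s with hs | hs
  · have hsqrt : √(2 * π * (v * w)) = √(2 * π * v) * √w := by
      rw [← mul_assoc, sqrt_mul (by positivity)]
    have hexp := congrArg exp (neg_sq_div_add_neg_sq_div hv.ne' hw.ne' hvw t s)
    rw [exp_add, exp_add] at hexp
    rw [indicator_of_mem (mem_Ioi.2 hs), rayleighDens, if_pos hs.le]
    simp only [normalDens, hsqrt]
    calc _ = s / (√(2 * π * v) * w) *
          (exp (-(t - s) ^ 2 / (2 * v)) * exp (-s ^ 2 / (2 * w))) := by ring
      _ = s / (√(2 * π * v) * (√w * √w)) *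
          (exp (-t ^ 2 / 2) * exp (-(s - t * w) ^ 2 / (2 * (v * w)))) := by
        rw [hexp, mul_self_sqrt hw.le]
      _ = _ := by ring
  · rw [indicator_of_notMem (notMem_Ioi.2 hs), rayleighDens]
    rcases hs.lt_or_eq with hs | rfl
    · simp [not_le.2 hs]
    · simp

lemma sqrt_mul_exp_mul_normalDens (hv : 0 < v) (hw : 0 < w) (hvw : v + w = 1) (t : ℝ) :
    √w * (exp (-t ^ 2 / 2) * normalDens (v * w) (t * w)) = normalDens v t := by
  have hexp : exp (-t ^ 2 / 2) * exp (-(t * w) ^ 2 / (2 * (v * w))) = exp (-t ^ 2 / (2 * v)) := by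
    rw [← exp_add]
    congr 1
    obtain rfl := eq_sub_of_add_eq hvw
    field_simp
    ring
  have hsqrt : √(2 * π * (v * w)) = √(2 * π * v) * √w := by
    rw [← mul_assoc, sqrt_mul (by positivity)]
  have : 0 < √w := sqrt_pos.2 hw
  simp only [normalDens, hsqrt, ← hexp]
  field_simp

theorem integral_normalDens_sub_mul_rayleighDens (hv : 0 < v) (hw : 0 < w) (hvw : v + w = 1)
    (t : ℝ) :
    ∫ s, normalDens v (t - s) * rayleighDens w s =
      v * normalDens v t + √w * (t * exp (-t ^ 2 / 2)) *
        ∫ s in Ioi 0, normalDens (v * w) (s - t * w) := by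
  simp_rw [normalDens_sub_mul_rayleighDens hv hw hvw t]
  rw [integral_const_mul, integral_indicator measurableSet_Ioi,
    integral_Ioi_mul_normalDens_sub (by positivity), ← sqrt_mul_exp_mul_normalDens hv hw hvw t]
  have : 0 < √w := sqrt_pos.2 hw
  field_simp
  rw [sq_sqrt hw.le]

lemma sqrt_mul_mul_one_sub_integral_Ioi_normalDens_le (hv : 0 < v) (hw : 0 < w)
    (hvw : v + w = 1) {t : ℝ} (ht : 0 ≤ t) :
    √w * (t * exp (-t ^ 2 / 2)) * (1 - ∫ s in Ioi 0, normalDens (v * w) (s - t * w)) ≤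
      v * normalDens v t := by
  rcases ht.lt_or_eq with ht | rfl
  · have htail := one_sub_integral_Ioi_normalDens_sub_le (mul_pos hv hw) (mul_pos ht hw)
    rw [sub_zero, zero_sub, normalDens_neg] at htail
    calc _ ≤ √w * (t * exp (-t ^ 2 / 2)) * (v * w / (t * w) * normalDens (v * w) (t * w)) := by
          gcongr
      _ = v * (√w * (exp (-t ^ 2 / 2) * normalDens (v * w) (t * w))) := by
          field_simp
      _ = v * normalDens v t := by rw [sqrt_mul_exp_mul_normalDens hv hw hvw]
  · simpa using mul_nonneg hv.le (normalDens_nonneg v 0)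

end Convolution

/-- For `v ∈ (0, 1/2]`, the convolution `φ_v * φ⁺_{1-v}` is close to `√(1-v) φ⁺`. -/
theorem stmt_1 (v : ℝ) (hv : v ∈ Set.Ioc (0 : ℝ) (1 / 2)) (t : ℝ) :
    -(|t| * Real.exp (-t ^ 2 / 2) * (if t < 0 then (1 : ℝ) else 0)) ≤
        (∫ s, normalDens v (t - s) * rayleighDens (1 - v) s) -
          Real.sqrt (1 - v) * rayleighDens 1 t ∧
      (∫ s, normalDens v (t - s) * rayleighDens (1 - v) s) -
          Real.sqrt (1 - v) * rayleighDens 1 t ≤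
        Real.sqrt v * Real.exp (-t ^ 2 / (2 * v)) +
          |t| * Real.exp (-t ^ 2 / 2) * (if t < 0 then (1 : ℝ) else 0) := by
  obtain ⟨hv0, hv_le⟩ := hv
  have hw : 0 < 1 - v := by linarith
  have hvw : v + (1 - v) = 1 := add_sub_cancel v 1
  rw [integral_normalDens_sub_mul_rayleighDens hv0 hw hvw t]
  set p := ∫ s in Ioi 0, normalDens (v * (1 - v)) (s - t * (1 - v))
  have hp0 : 0 ≤ p := setIntegral_nonneg measurableSet_Ioi fun s _ => normalDens_nonneg _ _
  have hp1 : p ≤ 1 := integral_Ioi_normalDens_sub_le_one (mul_pos hv0 hw) _ _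
  have hW0 : 0 ≤ √(1 - v) := sqrt_nonneg _
  have hW1 : √(1 - v) ≤ 1 := sqrt_le_one.2 (by linarith)
  have hA0 : 0 ≤ v * normalDens v t := mul_nonneg hv0.le (normalDens_nonneg v t)
  have hA1 := mul_normalDens_le hv0 t
  have hE : 0 < exp (-t ^ 2 / 2) := exp_pos _
  rcases lt_or_ge t 0 with ht | ht
  · have hray : rayleighDens 1 t = 0 := if_neg (not_le.2 ht)
    rw [hray, if_pos ht, abs_of_neg ht]
    have htE : t * exp (-t ^ 2 / 2) ≤ 0 := mul_nonpos_of_nonpos_of_nonneg ht.le hE.le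
    constructor
    · linarith [mul_nonneg (sub_nonneg.2 (mul_le_one₀ hW1 hp0 hp1)) (neg_nonneg.2 htE)]
    · linarith [mul_nonneg (mul_nonneg hW0 hp0) (neg_nonneg.2 htE)]
  · have hray : rayleighDens 1 t = t * exp (-t ^ 2 / 2) := by simp [rayleighDens, ht]
    rw [hray, if_neg (not_lt.2 ht)]
    have hdef := sqrt_mul_mul_one_sub_integral_Ioi_normalDens_le hv0 hw hvw ht
    have hdef0 : 0 ≤ √(1 - v) * (t * exp (-t ^ 2 / 2)) * (1 - p) :=
      mul_nonneg (mul_nonneg hW0 (mul_nonneg ht hE.le)) (sub_nonneg.2 hp1)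
    constructor <;> linarith
end

section
/- Let α > 0 and let a_1, …, a_n be nonnegative real numbers. Then exp(α √((1/n) ∑_{i=1}^n a_i²)) ≤ (1/n) ∑_{i=1}^n max{e, exp(α a_i)}. -/
/-!
The map `u ↦ exp (α √u)` is increasing, and convex on `[α⁻², ∞)`: its derivative is
`(α / 2) · exp (α t) / t` with `t = √u`, and `t ↦ exp (α t) / t` increases once `α t ≥ 1`.
Hence `u ↦ max e (exp (α √u)) = exp (α √(max u α⁻²))` is convex on all of `ℝ`, it dominates
`exp (α √u)`, and Jensen's inequality at the points `aᵢ²` gives the bound.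
-/

open Real Finset

theorem ConvexOn.map_card_inv_smul_sum_le {E β ι : Type*} [AddCommGroup E] [Module ℝ E]
    [AddCommGroup β] [PartialOrder β] [IsOrderedAddMonoid β] [Module ℝ β] [IsStrictOrderedModule ℝ β]
    {s : Set E} {f : E → β} (hf : ConvexOn ℝ s f) {t : Finset ι} (ht : t.Nonempty)
    {p : ι → E} (hp : ∀ i ∈ t, p i ∈ s) :
    f ((#t : ℝ)⁻¹ • ∑ i ∈ t, p i) ≤ (#t : ℝ)⁻¹ • ∑ i ∈ t, f (p i) := by
  have hcard : (#t : ℝ) ≠ 0 := by exact_mod_cast ht.card_pos.ne'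
  simpa only [smul_sum] using
    hf.map_sum_le (fun _ _ => by positivity) (by simp [hcard]) hp

namespace Real

theorem monotoneOn_exp_mul_div_self {α : ℝ} (hα : 0 < α) :
    MonotoneOn (fun t => exp (α * t) / t) (Set.Ici α⁻¹) := by
  intro s hs t _ hst
  have hs₀ : 0 < s := (inv_pos.2 hα).trans_le hs
  have hαs : 1 ≤ α * s := by rwa [Set.mem_Ici, inv_le_iff_one_le_mul₀' hα] at hs
  rw [div_le_div_iff₀ hs₀ (hs₀.trans_le hst)]
  calc exp (α * s) * t ≤ exp (α * s) * (s * (1 + α * (t - s))) := by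
        gcongr; nlinarith
    _ ≤ exp (α * s) * (s * exp (α * (t - s))) := by
        gcongr; linarith [add_one_le_exp (α * (t - s))]
    _ = exp (α * t) * s := by rw [mul_left_comm, ← exp_add]; ring_nf

theorem convexOn_exp_mul_sqrt {α : ℝ} (hα : 0 < α) :
    ConvexOn ℝ (Set.Ici (α⁻¹ ^ 2)) (fun u => exp (α * √u)) := by
  have hderiv : ∀ u ∈ Set.Ioi (α⁻¹ ^ 2),
      HasDerivAt (fun u => exp (α * √u)) (α / 2 * (exp (α * √u) / √u)) u := by
    intro u hu
    have hu₀ : u ≠ 0 := ((by positivity : (0 : ℝ) < α⁻¹ ^ 2).trans hu).ne'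
    convert ((hasDerivAt_sqrt hu₀).const_mul α).exp using 1
    field_simp
  have hsqrt : ∀ u ∈ Set.Ioi (α⁻¹ ^ 2), √u ∈ Set.Ici α⁻¹ := fun u hu =>
    le_sqrt_of_sq_le hu.le
  refine MonotoneOn.convexOn_of_deriv (convex_Ici _) (by fun_prop) ?_ ?_
  · rw [interior_Ici]
    exact fun u hu => (hderiv u hu).differentiableAt.differentiableWithinAt
  · rw [interior_Ici]
    intro u hu v hv huv
    rw [(hderiv u hu).deriv, (hderiv v hv).deriv]
    have := monotoneOn_exp_mul_div_self hα (hsqrt u hu) (hsqrt v hv) (sqrt_le_sqrt huv)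
    exact mul_le_mul_of_nonneg_left this (by positivity)

theorem exp_mul_sqrt_max_inv_sq {α : ℝ} (hα : 0 < α) (u : ℝ) :
    exp (α * √(max u (α⁻¹ ^ 2))) = max (exp 1) (exp (α * √u)) := by
  rw [sqrt_monotone.map_max, sqrt_sq (inv_pos.2 hα).le, mul_max_of_nonneg _ _ hα.le,
    mul_inv_cancel₀ hα.ne', exp_monotone.map_max, max_comm]

theorem convexOn_max_exp_one_exp_mul_sqrt {α : ℝ} (hα : 0 < α) :
    ConvexOn ℝ Set.univ (fun u => max (exp 1) (exp (α * √u))) := by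
  simp_rw [← exp_mul_sqrt_max_inv_sq hα]
  have hmax : ConvexOn ℝ Set.univ (fun u : ℝ => max u (α⁻¹ ^ 2)) :=
    (convexOn_id convex_univ).sup (convexOn_const _ convex_univ)
  have himage : (fun u : ℝ => max u (α⁻¹ ^ 2)) '' Set.univ = Set.Ici (α⁻¹ ^ 2) := by
    ext v
    simp only [Set.image_univ, Set.mem_range, Set.mem_Ici]
    exact ⟨fun ⟨u, hu⟩ => hu ▸ le_max_right _ _, fun hv => ⟨v, max_eq_left hv⟩⟩
  have hg : ConvexOn ℝ ((fun u : ℝ => max u (α⁻¹ ^ 2)) '' Set.univ)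
      (fun u => exp (α * √u)) := by
    rw [himage]; exact convexOn_exp_mul_sqrt hα
  exact hg.comp hmax fun x _ y _ hxy => by dsimp only; gcongr

end Real

/-- `exp(α √((1/n) ∑ aᵢ²)) ≤ (1/n) ∑ max{e, exp(α aᵢ)}` for nonnegative `aᵢ`. -/
theorem stmt_10 (n : ℕ) (hn : 0 < n) (α : ℝ) (hα : 0 < α) (a : Fin n → ℝ)
    (ha : ∀ i, 0 ≤ a i) :
    Real.exp (α * Real.sqrt ((1 / (n : ℝ)) * ∑ i, a i ^ 2)) ≤
      (1 / (n : ℝ)) * ∑ i, max (Real.exp 1) (Real.exp (α * a i)) := by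
  have hjensen := (convexOn_max_exp_one_exp_mul_sqrt hα).map_card_inv_smul_sum_le
    (univ_nonempty_iff.2 ⟨⟨0, hn⟩⟩) (p := fun i : Fin n => a i ^ 2) (fun _ _ => trivial)
  simp only [card_univ, Fintype.card_fin, smul_eq_mul, sqrt_sq (ha _)] at hjensen
  rw [one_div]
  exact (le_max_right _ _).trans hjensen
end

section
/- Let κ : ℝ → ℝ be a nonnegative continuously differentiable function supported in [−a, a], and let G : ℝ → ℝ be bounded measurable with |G| ≤ H for a nonnegative function H. Then for all t, t' ∈ ℝ and b ≥ 0 with |t − t'| ≤ b, |(G * κ)(t) − (G * κ)(t')| ≤ ‖κ'‖_∞ · |t − t'| · (H * 1_{[−a−b, a+b]})(t), where ‖κ'‖_∞ = sup |κ'| and * denotes convolution. -/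
/-!
Translating the kernel by `t' - t` turns the second convolution into
`∫ G (t - s) κ (s + t' - t)`, so the two integrands differ by `G (t - s) (κ s - κ (s + t' - t))`.
By the mean value theorem this is at most `K |t - t'| H (t - s)`, and it vanishes unless `s`
lies within `|t - t'| ≤ b` of the support `[-a, a]` of `κ`.
-/

open MeasureTheory Set

theorem abs_sub_le_of_hasDerivAt_of_abs_le {f f' : ℝ → ℝ} {K : ℝ}
    (hf : ∀ x, HasDerivAt f (f' x) x) (hf' : ∀ x, |f' x| ≤ K) (x y : ℝ) :
    |f x - f y| ≤ K * |x - y| :=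
  convex_univ.norm_image_sub_le_of_norm_hasDerivWithin_le (fun z _ => (hf z).hasDerivWithinAt)
    (fun z _ => hf' z) (mem_univ y) (mem_univ x)

theorem abs_sub_add_le_mul_indicator {f : ℝ → ℝ} {a b K : ℝ}
    (hf : ∀ x, x ∉ Icc (-a) a → f x = 0) (hlip : ∀ x y, |f x - f y| ≤ K * |x - y|)
    {x d : ℝ} (hd : |d| ≤ b) :
    |f x - f (x + d)| ≤ K * |d| * indicator (Icc (-a - b) (a + b)) (fun _ => (1 : ℝ)) x := by
  obtain ⟨hd₁, hd₂⟩ := abs_le.mp hd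
  by_cases hx : x ∈ Icc (-a - b) (a + b)
  · simpa [indicator_of_mem hx, abs_sub_comm] using hlip x (x + d)
  · have hfx : f x = 0 := hf x fun h => hx ⟨by linarith [h.1], by linarith [h.2]⟩
    have hfxd : f (x + d) = 0 := hf (x + d) fun h => hx ⟨by linarith [h.1], by linarith [h.2]⟩
    simp [indicator_of_notMem hx, hfx, hfxd]

theorem abs_integral_sub_integral_le {α : Type*} [MeasurableSpace α] {μ : Measure α}
    {f g h : α → ℝ} (hf : Integrable f μ) (hg : Integrable g μ) (hh : Integrable h μ)
    (hfg : ∀ᵐ x ∂μ, |f x - g x| ≤ h x) :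
    |∫ x, f x ∂μ - ∫ x, g x ∂μ| ≤ ∫ x, h x ∂μ := by
  rw [← integral_sub hf hg]
  exact norm_integral_le_of_norm_le (f := fun x => f x - g x) hh hfg

theorem stmt_17_general (a b K : ℝ)
    (κ κ' G H : ℝ → ℝ)
    (hκsupp : ∀ s, s ∉ Set.Icc (-a) a → κ s = 0)
    (hκderiv : ∀ s, HasDerivAt κ (κ' s) s)
    (hK : ∀ s, |κ' s| ≤ K)
    (hHpos : ∀ s, 0 ≤ H s) (hGH : ∀ s, |G s| ≤ H s)
    (t t' : ℝ) (htt' : |t - t'| ≤ b)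
    (hint1 : Integrable (fun s => G (t - s) * κ s))
    (hint2 : Integrable (fun s => G (t' - s) * κ s))
    (hint3 : Integrable (fun s =>
      H (t - s) * Set.indicator (Set.Icc (-a - b) (a + b)) (fun _ => (1 : ℝ)) s)) :
    |(∫ s, G (t - s) * κ s) - ∫ s, G (t' - s) * κ s| ≤
      K * |t - t'| *
        ∫ s, H (t - s) * Set.indicator (Set.Icc (-a - b) (a + b)) (fun _ => (1 : ℝ)) s := by
  have hshift (s : ℝ) : G (t' - (s + (t' - t))) * κ (s + (t' - t)) =
      G (t - s) * κ (s + (t' - t)) := by ring_nf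
  have hint2' : Integrable (fun s => G (t - s) * κ (s + (t' - t))) := by
    simpa only [hshift] using hint2.comp_add_right (t' - t)
  rw [← integral_add_right_eq_self (fun s => G (t' - s) * κ s) (t' - t), ← integral_const_mul]
  simp only [hshift]
  refine abs_integral_sub_integral_le hint1 hint2' (hint3.const_mul _) (.of_forall fun s => ?_)
  calc |G (t - s) * κ s - G (t - s) * κ (s + (t' - t))|
      = |G (t - s)| * |κ s - κ (s + (t' - t))| := by rw [← mul_sub, abs_mul]
    _ ≤ H (t - s) * (K * |t' - t| * indicator (Icc (-a - b) (a + b)) (fun _ => (1 : ℝ)) s) :=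
        mul_le_mul (hGH _)
          (abs_sub_add_le_mul_indicator hκsupp (abs_sub_le_of_hasDerivAt_of_abs_le hκderiv hK)
            (by rwa [abs_sub_comm]))
          (abs_nonneg _) (hHpos _)
    _ = K * |t - t'| * (H (t - s) * indicator (Icc (-a - b) (a + b)) (fun _ => (1 : ℝ)) s) := by
        rw [abs_sub_comm]; ring

/-- Lipschitz estimate for convolutions with a smooth compactly supported kernel:
if `κ` is `C¹`, nonnegative, supported in `[-a,a]`, `|G| ≤ H` and `|t - t'| ≤ b`, then
`|(G*κ)(t) - (G*κ)(t')| ≤ ‖κ'‖_∞ |t - t'| (H * 1_{[-a-b,a+b]})(t)`. -/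
theorem stmt_17 (a b K : ℝ) (ha : 0 < a) (hb : 0 ≤ b)
    (κ κ' G H : ℝ → ℝ)
    (hκpos : ∀ s, 0 ≤ κ s)
    (hκsupp : ∀ s, s ∉ Set.Icc (-a) a → κ s = 0)
    (hκderiv : ∀ s, HasDerivAt κ (κ' s) s)
    (hκ'cont : Continuous κ')
    (hK : ∀ s, |κ' s| ≤ K)
    (hG : Measurable G) (hH : Measurable H)
    (hHpos : ∀ s, 0 ≤ H s) (hGH : ∀ s, |G s| ≤ H s)
    (t t' : ℝ) (htt' : |t - t'| ≤ b)
    (hint1 : Integrable (fun s => G (t - s) * κ s))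
    (hint2 : Integrable (fun s => G (t' - s) * κ s))
    (hint3 : Integrable (fun s =>
      H (t - s) * Set.indicator (Set.Icc (-a - b) (a + b)) (fun _ => (1 : ℝ)) s)) :
    |(∫ s, G (t - s) * κ s) - ∫ s, G (t' - s) * κ s| ≤
      K * |t - t'| *
        ∫ s, H (t - s) * Set.indicator (Set.Icc (-a - b) (a + b)) (fun _ => (1 : ℝ)) s :=
  stmt_17_general a b K κ κ' G H hκsupp hκderiv hK hHpos hGH t t' htt' hint1 hint2 hint3
end

section
/- Let F : X × ℝ → ℝ₊ be a nonnegative continuous function with compact support, where X is a compact metric space. Then for every k ≥ 1 there exist compactly supported functions G_k, H_k : X × ℝ → ℝ₊ that are Lipschitz in the second variable and γ-Hölder in the first variable, such that H_k(x, t) ≤ F(x, t + v) ≤ G_k(x, t + w) for all x ∈ X, t ∈ ℝ and all |v|, |w| ≤ 1/k, the sequence (G_k) is decreasing, (H_k) is increasing, and both G_k and H_k converge uniformly to F as k → ∞. -/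
/-!
`G_k` and `H_k` are the sup- and inf-convolutions `⨆ q, F q - c_k p q` and `⨅ q, F q + c_k p q`
with the penalty `c_k ((x, t), (y, s)) = k * (d(x, y) ^ γ + (|t - s| - 1/k)₊)`. The penalty
vanishes for `x = y`, `|t - s| ≤ 1/k`, which gives the `1/k`-dominations; it is `k`-Lipschitz in
its first argument for `d ^ γ + |·|` (a metric since `γ ≤ 1`), which the convolutions inherit;
it increases with `k`, so `G_k` decreases and `H_k` increases; and it blows up uniformly off the
diagonal, which together with uniform continuity of `F` gives uniform convergence.
-/

open Real Filter Set

section Convolution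

variable {α : Type*} {F : α → ℝ} {c c' : α → α → ℝ} {p p' : α} {b L : ℝ}

noncomputable def supConv (F : α → ℝ) (c : α → α → ℝ) (p : α) : ℝ :=
  ⨆ q, F q - c p q

/-- `⨅ q, F q + c p q`, written through `supConv` so that its theory is inherited. -/
noncomputable def infConv (F : α → ℝ) (c : α → α → ℝ) (p : α) : ℝ :=
  -supConv (fun q => -F q) c p

theorem sub_le_supConv (hF : BddAbove (range F)) (hc : ∀ q, 0 ≤ c p q) (q : α) :
    F q - c p q ≤ supConv F c p := by
  refine le_ciSup (f := fun q => F q - c p q) ⟨sSup (range F), ?_⟩ q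
  rintro _ ⟨r, rfl⟩
  linarith [hc r, le_csSup hF ⟨r, rfl⟩]

theorem supConv_le (h : ∀ q, F q - c p q ≤ b) : supConv F c p ≤ b :=
  have : Nonempty α := ⟨p⟩
  ciSup_le h

theorem le_supConv_self (hF : BddAbove (range F)) (hc : ∀ q, 0 ≤ c p q) (hp : c p p = 0) :
    F p ≤ supConv F c p := by
  simpa [hp] using sub_le_supConv hF hc p

theorem supConv_anti (hF : BddAbove (range F)) (hc : ∀ q, 0 ≤ c p q)
    (h : ∀ q, c p q ≤ c' p q) : supConv F c' p ≤ supConv F c p :=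
  supConv_le fun q => by linarith [h q, sub_le_supConv hF hc q]

theorem supConv_le_add (hF : BddAbove (range F)) (hc : ∀ q, 0 ≤ c p' q)
    (h : ∀ q, c p' q ≤ c p q + L) : supConv F c p ≤ supConv F c p' + L :=
  supConv_le fun q => by linarith [h q, sub_le_supConv hF hc q]

theorem abs_supConv_sub_le (hF : BddAbove (range F)) (hc : ∀ p q, 0 ≤ c p q)
    {ρ : α → α → ℝ} (hρ : ∀ p p', ρ p p' = ρ p' p)
    (h : ∀ p p' q, c p' q ≤ c p q + ρ p p')
    (p p' : α) : |supConv F c p - supConv F c p'| ≤ ρ p p' := by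
  rw [abs_sub_le_iff]
  constructor
  · linarith [supConv_le_add hF (hc p') (h p p')]
  · linarith [supConv_le_add hF (hc p) (h p' p), hρ p p']

theorem tendstoUniformly_supConv [PseudoMetricSpace α] {ι : Type*} {l : Filter ι}
    {c : ι → α → α → ℝ} (hFc : UniformContinuous F) (hFa : BddAbove (range F))
    (hFb : BddBelow (range F)) (hc : ∀ i p q, 0 ≤ c i p q) (hdiag : ∀ i p, c i p p = 0)
    (hfar : ∀ δ > 0, ∀ B, ∀ᶠ i in l, ∀ p q, δ ≤ dist p q → B ≤ c i p q) :
    TendstoUniformly (fun i => supConv F (c i)) F l := by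
  rw [Metric.tendstoUniformly_iff]
  intro ε hε
  obtain ⟨δ, hδ, hFδ⟩ := Metric.uniformContinuous_iff.1 hFc (ε / 2) (half_pos hε)
  obtain ⟨M, hM⟩ := hFa
  obtain ⟨m, hm⟩ := hFb
  filter_upwards [hfar δ hδ (M - m)] with i hi p
  have hlow := le_supConv_self ⟨M, hM⟩ (hc i p) (hdiag i p)
  have hup : supConv F (c i) p ≤ F p + ε / 2 := supConv_le fun q => by
    rcases lt_or_ge (dist p q) δ with hpq | hpq
    · have := (abs_sub_lt_iff.1 (hFδ hpq)).2
      linarith [hc i p q]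
    · linarith [hi p q hpq, hM ⟨q, rfl⟩, hm ⟨p, rfl⟩]
  rw [dist_comm, Real.dist_eq, abs_of_nonneg (by linarith)]
  linarith

theorem infConv_le_add (hF : BddBelow (range F)) (hc : ∀ q, 0 ≤ c p q) (q : α) :
    infConv F c p ≤ F q + c p q := by
  have := sub_le_supConv hF.range_neg hc q
  rw [infConv]
  linarith

theorem le_infConv (h : ∀ q, b ≤ F q + c p q) : b ≤ infConv F c p :=
  le_neg.2 <| supConv_le fun q => by linarith [h q]

theorem infConv_le_self (hF : BddBelow (range F)) (hc : ∀ q, 0 ≤ c p q) (hp : c p p = 0) :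
    infConv F c p ≤ F p := by
  simpa [hp] using infConv_le_add hF hc p

theorem infConv_mono (hF : BddBelow (range F)) (hc : ∀ q, 0 ≤ c p q)
    (h : ∀ q, c p q ≤ c' p q) : infConv F c p ≤ infConv F c' p :=
  neg_le_neg <| supConv_anti hF.range_neg hc h

theorem abs_infConv_sub_le (hF : BddBelow (range F)) (hc : ∀ p q, 0 ≤ c p q)
    {ρ : α → α → ℝ} (hρ : ∀ p p', ρ p p' = ρ p' p)
    (h : ∀ p p' q, c p' q ≤ c p q + ρ p p')
    (p p' : α) : |infConv F c p - infConv F c p'| ≤ ρ p p' := by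
  rw [infConv, infConv, neg_sub_neg, abs_sub_comm]
  exact abs_supConv_sub_le hF.range_neg hc hρ h p p'

theorem tendstoUniformly_infConv [PseudoMetricSpace α] {ι : Type*} {l : Filter ι}
    {c : ι → α → α → ℝ} (hFc : UniformContinuous F) (hFa : BddAbove (range F))
    (hFb : BddBelow (range F)) (hc : ∀ i p q, 0 ≤ c i p q) (hdiag : ∀ i p, c i p p = 0)
    (hfar : ∀ δ > 0, ∀ B, ∀ᶠ i in l, ∀ p q, δ ≤ dist p q → B ≤ c i p q) :
    TendstoUniformly (fun i => infConv F (c i)) F l := by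
  have := Real.uniformContinuous_neg.comp_tendstoUniformly
    (tendstoUniformly_supConv hFc.neg hFb.range_neg hFa.range_neg hc hdiag hfar)
  simp only [Function.comp_def, neg_neg] at this
  exact this

theorem hasCompactSupport_infConv [TopologicalSpace α] (hF : HasCompactSupport F)
    (hF0 : ∀ p, 0 ≤ F p) (hc : ∀ p q, 0 ≤ c p q) (hdiag : ∀ p, c p p = 0) :
    HasCompactSupport (infConv F c) := by
  have hFb : BddBelow (range F) := ⟨0, by rintro _ ⟨p, rfl⟩; exact hF0 p⟩
  refine hF.mono fun p hp hFp => hp (le_antisymm ?_ ?_)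
  · exact hFp ▸ infConv_le_self hFb (hc p) (hdiag p)
  · exact le_infConv fun q => add_nonneg (hF0 q) (hc p q)

end Convolution

section Penalty

variable {X : Type*} [PseudoMetricSpace X] {γ : ℝ}

theorem rpow_dist_triangle (hγ0 : 0 ≤ γ) (hγ1 : γ ≤ 1) (x y z : X) :
    dist x z ^ γ ≤ dist x y ^ γ + dist y z ^ γ :=
  (rpow_le_rpow dist_nonneg (dist_triangle x y z) hγ0).trans
    (rpow_add_le_add_rpow dist_nonneg dist_nonneg hγ0 hγ1)

noncomputable def penalty (γ : ℝ) (k : ℕ) (p q : X × ℝ) : ℝ :=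
  k * (dist p.1 q.1 ^ γ + max (|p.2 - q.2| - 1 / k) 0)

theorem penalty_nonneg (k : ℕ) (p q : X × ℝ) : 0 ≤ penalty γ k p q := by
  unfold penalty
  have := rpow_nonneg (dist_nonneg (x := p.1) (y := q.1)) γ
  positivity

theorem penalty_eq_zero (hγ : 0 < γ) {k : ℕ} (x : X) {t s : ℝ} (h : |t - s| ≤ 1 / k) :
    penalty γ k (x, t) (x, s) = 0 := by
  simp only [penalty, dist_self, zero_rpow hγ.ne', zero_add]
  rw [max_eq_right (by linarith), mul_zero]

theorem penalty_self (hγ : 0 < γ) (k : ℕ) (p : X × ℝ) : penalty γ k p p = 0 :=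
  penalty_eq_zero hγ p.1 (by simp)

theorem penalty_le_add (hγ0 : 0 ≤ γ) (hγ1 : γ ≤ 1) (k : ℕ) (p p' q : X × ℝ) :
    penalty γ k p' q ≤ penalty γ k p q + k * (dist p.1 p'.1 ^ γ + |p.2 - p'.2|) := by
  unfold penalty
  rw [← mul_add]
  refine mul_le_mul_of_nonneg_left ?_ k.cast_nonneg
  have hx := rpow_dist_triangle hγ0 hγ1 p'.1 p.1 q.1
  rw [dist_comm p'.1 p.1] at hx
  have ht : max (|p'.2 - q.2| - 1 / k) 0 ≤ max (|p.2 - q.2| - 1 / k) 0 + |p.2 - p'.2| := by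
    refine max_le ?_ (by positivity)
    linarith [abs_sub_le p'.2 p.2 q.2, abs_sub_comm p'.2 p.2, le_max_left (|p.2 - q.2| - 1 / k) 0]
  linarith

theorem penalty_mono {k m : ℕ} (hkm : k ≤ m) (p q : X × ℝ) :
    penalty γ k p q ≤ penalty γ m p q := by
  rcases Nat.eq_zero_or_pos k with rfl | hk
  · simpa [penalty] using penalty_nonneg m p q
  have hinv : 1 / (m : ℝ) ≤ 1 / k :=
    one_div_le_one_div_of_le (by positivity) (by exact_mod_cast hkm)
  unfold penalty
  have := rpow_nonneg (dist_nonneg (x := p.1) (y := q.1)) γ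
  gcongr

theorem sub_one_le_penalty {k : ℕ} (hk : 1 ≤ k) (p q : X × ℝ) :
    |p.2 - q.2| - 1 ≤ penalty γ k p q := by
  have hk' : (1 : ℝ) ≤ k := by exact_mod_cast hk
  have hinv : 1 / (k : ℝ) ≤ 1 := by rw [div_le_one (by positivity)]; exact hk'
  have hd := rpow_nonneg (dist_nonneg (x := p.1) (y := q.1)) γ
  unfold penalty
  nlinarith [le_max_left (|p.2 - q.2| - 1 / k) 0, le_max_right (|p.2 - q.2| - 1 / k) 0]

theorem eventually_le_penalty (hγ : 0 < γ) {δ : ℝ} (hδ : 0 < δ) (B : ℝ) :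
    ∀ᶠ k : ℕ in atTop, ∀ p q : X × ℝ, δ ≤ dist p q → B ≤ penalty γ k p q := by
  filter_upwards [eventually_ge_atTop 1,
    tendsto_natCast_atTop_atTop.eventually_ge_atTop (2 / δ),
    tendsto_natCast_atTop_atTop.eventually_ge_atTop (B / δ ^ γ),
    tendsto_natCast_atTop_atTop.eventually_ge_atTop (2 * B / δ)]
    with k hk hk₁ hk₂ hk₃ p q hpq
  have hkpos : (0 : ℝ) < k := by exact_mod_cast hk
  rw [div_le_iff₀ hδ] at hk₁ hk₃
  rw [div_le_iff₀ (rpow_pos_of_pos hδ γ)] at hk₂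
  have hd := rpow_nonneg (dist_nonneg (x := p.1) (y := q.1)) γ
  have hmax := le_max_right (|p.2 - q.2| - 1 / k) 0
  unfold penalty
  rw [Prod.dist_eq, le_max_iff, Real.dist_eq] at hpq
  rcases hpq with hx | ht
  · calc B ≤ k * δ ^ γ := hk₂
      _ ≤ _ := mul_le_mul_of_nonneg_left
          (by linarith [rpow_le_rpow hδ.le hx hγ.le]) k.cast_nonneg
  · have hinv : 1 / (k : ℝ) ≤ δ / 2 := by
      rw [div_le_div_iff₀ hkpos two_pos]
      linarith
    calc B ≤ k * (δ / 2) := by linarith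
      _ ≤ _ := mul_le_mul_of_nonneg_left
          (by linarith [le_max_left (|p.2 - q.2| - 1 / k) 0]) k.cast_nonneg

variable {F : X × ℝ → ℝ}

theorem abs_supConv_penalty_sub_le (hF : BddAbove (range F)) (hγ0 : 0 ≤ γ) (hγ1 : γ ≤ 1)
    (k : ℕ) (p q : X × ℝ) :
    |supConv F (penalty γ k) p - supConv F (penalty γ k) q| ≤
      k * (dist p.1 q.1 ^ γ + |p.2 - q.2|) :=
  abs_supConv_sub_le hF (penalty_nonneg k) (fun _ _ => by rw [dist_comm, abs_sub_comm])
    (penalty_le_add hγ0 hγ1 k) p q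

theorem abs_infConv_penalty_sub_le (hF : BddBelow (range F)) (hγ0 : 0 ≤ γ) (hγ1 : γ ≤ 1)
    (k : ℕ) (p q : X × ℝ) :
    |infConv F (penalty γ k) p - infConv F (penalty γ k) q| ≤
      k * (dist p.1 q.1 ^ γ + |p.2 - q.2|) :=
  abs_infConv_sub_le hF (penalty_nonneg k) (fun _ _ => by rw [dist_comm, abs_sub_comm])
    (penalty_le_add hγ0 hγ1 k) p q

theorem le_supConv_penalty (hF : BddAbove (range F)) (hγ : 0 < γ) {k : ℕ} (x : X) (t : ℝ)
    {w : ℝ} (hw : |w| ≤ 1 / k) : F (x, t) ≤ supConv F (penalty γ k) (x, t + w) := by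
  have hzero : penalty γ k (x, t + w) (x, t) = 0 :=
    penalty_eq_zero hγ x (by rwa [add_sub_cancel_left])
  simpa [hzero] using sub_le_supConv hF (penalty_nonneg (γ := γ) k (x, t + w)) (x, t)

theorem infConv_penalty_le (hF : BddBelow (range F)) (hγ : 0 < γ) {k : ℕ} (x : X) (t : ℝ)
    {v : ℝ} (hv : |v| ≤ 1 / k) : infConv F (penalty γ k) (x, t) ≤ F (x, t + v) := by
  have hzero : penalty γ k (x, t) (x, t + v) = 0 :=
    penalty_eq_zero hγ x (by rwa [sub_add_cancel_left, abs_neg])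
  simpa [hzero] using infConv_le_add hF (penalty_nonneg (γ := γ) k (x, t)) (x, t + v)

theorem hasCompactSupport_supConv_penalty [CompactSpace X] (hF : Continuous F)
    (hF0 : ∀ p, 0 ≤ F p) (hFsupp : HasCompactSupport F) (hγ : 0 < γ) {k : ℕ}
    (hk : 1 ≤ k) : HasCompactSupport (supConv F (penalty γ k)) := by
  obtain ⟨M, hM⟩ := hF.bddAbove_range_of_hasCompactSupport hFsupp
  obtain ⟨R, hR⟩ := hFsupp.isCompact.exists_bound_of_continuousOn continuous_snd.continuousOn
  refine HasCompactSupport.intro (isCompact_univ.prod (isCompact_closedBall (0 : ℝ) (R + 1 + M)))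
    fun p hp => le_antisymm (supConv_le fun q => ?_)
      ((hF0 p).trans (le_supConv_self ⟨M, hM⟩ (penalty_nonneg k p) (penalty_self hγ k p)))
  have hp2 : R + 1 + M < |p.2| := by simpa [Real.dist_eq] using hp
  by_cases hq : F q = 0
  · linarith [penalty_nonneg (γ := γ) k p q]
  · have hq2 : |q.2| ≤ R := by simpa using hR q (subset_tsupport F hq)
    linarith [sub_one_le_penalty (γ := γ) hk p q, abs_sub_abs_le_abs_sub p.2 q.2, hM ⟨q, rfl⟩]

end Penalty

/-- Approximation of a nonnegative continuous compactly supported function `F` on `X × ℝ`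
by monotone sequences of `γ`-regular compactly supported functions `G_k, H_k` with
`H_k ≤_{1/k} F ≤_{1/k} G_k`, converging uniformly to `F`. -/
theorem stmt_19 {X : Type*} [MetricSpace X] [CompactSpace X] (γ : ℝ)
    (hγ : γ ∈ Set.Ioo (0 : ℝ) 1) (F : X × ℝ → ℝ) (hF : Continuous F)
    (hFpos : ∀ p, 0 ≤ F p) (hFsupp : HasCompactSupport F) :
    ∃ G H : ℕ → X × ℝ → ℝ,
      (∀ k, 1 ≤ k →
        (∀ p, 0 ≤ G k p) ∧ (∀ p, 0 ≤ H k p) ∧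
        HasCompactSupport (G k) ∧ HasCompactSupport (H k) ∧
        (∃ L : ℝ, ∀ p q : X × ℝ,
          |G k p - G k q| ≤ L * (dist p.1 q.1 ^ γ + |p.2 - q.2|)) ∧
        (∃ L : ℝ, ∀ p q : X × ℝ,
          |H k p - H k q| ≤ L * (dist p.1 q.1 ^ γ + |p.2 - q.2|)) ∧
        (∀ (x : X) (t v : ℝ), |v| ≤ 1 / (k : ℝ) → H k (x, t) ≤ F (x, t + v)) ∧
        (∀ (x : X) (t w : ℝ), |w| ≤ 1 / (k : ℝ) → F (x, t) ≤ G k (x, t + w))) ∧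
      (∀ k, 1 ≤ k → ∀ p, G (k + 1) p ≤ G k p) ∧
      (∀ k, 1 ≤ k → ∀ p, H k p ≤ H (k + 1) p) ∧
      TendstoUniformly (fun k => G k) F atTop ∧
      TendstoUniformly (fun k => H k) F atTop := by
  obtain ⟨hγ0, hγ1⟩ := hγ
  have hFa : BddAbove (range F) := hF.bddAbove_range_of_hasCompactSupport hFsupp
  have hFb : BddBelow (range F) := ⟨0, by rintro _ ⟨p, rfl⟩; exact hFpos p⟩
  have hUC := hFsupp.uniformContinuous_of_continuous hF
  have hfar := fun δ (hδ : 0 < δ) => eventually_le_penalty (X := X) hγ0 hδ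
  refine ⟨fun k => supConv F (penalty γ k), fun k => infConv F (penalty γ k),
    fun k hk => ⟨fun p => ?_, fun p => ?_, ?_, ?_, ⟨k, ?_⟩, ⟨k, ?_⟩, ?_, ?_⟩,
    ?_, ?_, ?_, ?_⟩
  · exact (hFpos p).trans (le_supConv_self hFa (penalty_nonneg k p) (penalty_self hγ0 k p))
  · exact le_infConv fun q => add_nonneg (hFpos q) (penalty_nonneg k p q)
  · exact hasCompactSupport_supConv_penalty hF hFpos hFsupp hγ0 hk
  · exact hasCompactSupport_infConv hFsupp hFpos (penalty_nonneg k) (penalty_self hγ0 k)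
  · exact abs_supConv_penalty_sub_le hFa hγ0.le hγ1.le k
  · exact abs_infConv_penalty_sub_le hFb hγ0.le hγ1.le k
  · exact fun x t v hv => infConv_penalty_le hFb hγ0 x t hv
  · exact fun x t w hw => le_supConv_penalty hFa hγ0 x t hw
  · exact fun k _ p => supConv_anti hFa (penalty_nonneg k p) fun q => penalty_mono k.le_succ p q
  · exact fun k _ p => infConv_mono hFb (penalty_nonneg k p) fun q => penalty_mono k.le_succ p q
  · exact tendstoUniformly_supConv hUC hFa hFb penalty_nonneg (penalty_self hγ0) hfar
  · exact tendstoUniformly_infConv hUC hFa hFb penalty_nonneg (penalty_self hγ0) hfar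
end
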